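/- Let m ∈ [0,1], k ≥ 1 an integer, and fix OPT > 0. Suppose for each r ∈ {1,...,k}: a_r - a_{r-1} ≥ (b_{r-1} - a_{r-1})/k and b_{r-1} ≥ m·OPT + (1-m)(1-1/k)^{r-1}·OPT, with a_0 ≥ 0. Then a_k ≥ (m(1-(1-1/k)^k) + (1-m)(1-1/k)^{k-1})·OPT. -/

import Mathlib

/-!
With `p = 1/k` and `q = 1 - 1/k` the hypothesis on `a` reads `a (r + 1) ≥ q * a r + p * b r`.
The closed form `greedyBound` solves the same affine recurrence with `b r` replaced by its lower
bound `m + (1 - m) q^r` (times `OPT`), so a comparison argument for affine recurrences with a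
nonnegative coefficient `q` bounds `a r` from below by it; at `r = k` the bound is the claim.
-/

/-- For `r = 0` the truncated exponent `r - 1` is harmless: the term carries the factor `r`. -/
def greedyBound (m p q : ℝ) (r : ℕ) : ℝ :=
  m * (1 - q ^ r) + (1 - m) * (r * p) * q ^ (r - 1)

theorem greedyBound_zero (m p q : ℝ) : greedyBound m p q 0 = 0 := by
  simp [greedyBound]

theorem greedyBound_succ {p q : ℝ} (hpq : p + q = 1) (m : ℝ) (r : ℕ) :
    greedyBound m p q (r + 1) = q * greedyBound m p q r + p * (m + (1 - m) * q ^ r) := by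
  have hp : p = 1 - q := by linarith
  rcases r with _ | r
  · simp only [greedyBound, hp]
    ring
  · simp only [greedyBound, Nat.add_sub_cancel, pow_succ, hp]
    push_cast
    ring

theorem le_of_affine_recurrence {q : ℝ} (hq : 0 ≤ q) {n : ℕ} {x y c : ℕ → ℝ}
    (h0 : y 0 ≤ x 0) (hy : ∀ r < n, y (r + 1) ≤ q * y r + c r)
    (hx : ∀ r < n, q * x r + c r ≤ x (r + 1)) : ∀ r ≤ n, y r ≤ x r := by
  intro r
  induction r with
  | zero => exact fun _ => h0
  | succ r ih =>
    intro hr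
    calc y (r + 1) ≤ q * y r + c r := hy r hr
      _ ≤ q * x r + c r := by gcongr; exact ih (Nat.le_of_succ_le hr)
      _ ≤ x (r + 1) := hx r hr

theorem stmt_14_general (k : ℕ) (hk : 1 ≤ k) (m OPT : ℝ) (a b : ℕ → ℝ) (ha0 : 0 ≤ a 0)
    (hrec : ∀ r, 1 ≤ r → r ≤ k → a r - a (r - 1) ≥ (b (r - 1) - a (r - 1)) / (k : ℝ))
    (hb : ∀ r, 1 ≤ r → r ≤ k →
      b (r - 1) ≥ m * OPT + (1 - m) * (1 - 1 / (k : ℝ)) ^ (r - 1) * OPT) :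
    a k ≥ (m * (1 - (1 - 1 / (k : ℝ)) ^ k) +
      (1 - m) * (1 - 1 / (k : ℝ)) ^ (k - 1)) * OPT := by
  have hk0 : (0 : ℝ) < k := by exact_mod_cast hk
  set p : ℝ := 1 / k with hp
  set q : ℝ := 1 - p
  have hp0 : 0 ≤ p := by positivity
  have hq0 : 0 ≤ q := by
    have : p ≤ 1 := div_le_one_of_le₀ (by exact_mod_cast hk) hk0.le
    linarith
  have hbound_step : ∀ r < k,
      greedyBound m p q (r + 1) * OPT ≤ q * (greedyBound m p q r * OPT) + p * b r := by
    intro r hr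
    have hbr := hb (r + 1) (by omega) hr
    rw [Nat.add_sub_cancel] at hbr
    have := mul_le_mul_of_nonneg_left hbr hp0
    rw [greedyBound_succ (by ring)]
    linarith
  have ha_step : ∀ r < k, q * a r + p * b r ≤ a (r + 1) := by
    intro r hr
    have hrecr := hrec (r + 1) (by omega) hr
    rw [Nat.add_sub_cancel, ← mul_one_div, ← hp] at hrecr
    linarith
  have hbound := le_of_affine_recurrence hq0 (y := fun r => greedyBound m p q r * OPT)
    (by simpa [greedyBound_zero] using ha0) hbound_step ha_step k le_rfl
  have hkp : (k : ℝ) * p = 1 := by rw [hp]; field_simp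
  simpa [greedyBound, hkp] using hbound

theorem stmt_14 (k : ℕ) (hk : 1 ≤ k) (m OPT : ℝ) (hm0 : 0 ≤ m) (hm1 : m ≤ 1)
    (hOPT : 0 < OPT) (a b : ℕ → ℝ) (ha0 : 0 ≤ a 0)
    (hrec : ∀ r, 1 ≤ r → r ≤ k → a r - a (r - 1) ≥ (b (r - 1) - a (r - 1)) / (k : ℝ))
    (hb : ∀ r, 1 ≤ r → r ≤ k →
      b (r - 1) ≥ m * OPT + (1 - m) * (1 - 1 / (k : ℝ)) ^ (r - 1) * OPT) :
    a k ≥ (m * (1 - (1 - 1 / (k : ℝ)) ^ k) +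
      (1 - m) * (1 - 1 / (k : ℝ)) ^ (k - 1)) * OPT :=
  stmt_14_general k hk m OPT a b ha0 hrec hb
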